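/- arXiv:2103.05036 — 4 statements merged into one kernel-verified Lean document; each statement's English description precedes it below -/
import Mathlib

section
/- For every positive integer n, Σ_{k even, 1 ≤ k ≤ n+1} k·c(n+1,k) = ((n+1)!/2)·(1/(n(n+1)) + H_{n+1}). -/
open Finset
open scoped Classical

/-- Number of cycles of a permutation, counting fixed points as cycles of length 1. -/
noncomputable def cycleCount {α : Type*} [Fintype α] [DecidableEq α] (σ : Equiv.Perm α) : ℕ :=
  σ.cycleType.card + (Finset.univ.filter fun x => σ x = x).card

/-- The full cycle type of a permutation, including parts of size 1 for fixed points. -/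
noncomputable def fullCycleType {α : Type*} [Fintype α] [DecidableEq α] (σ : Equiv.Perm α) :
    Multiset ℕ :=
  σ.cycleType + Multiset.replicate (Finset.univ.filter fun x => σ x = x).card 1

/-- The set of full `n`-cycles in the symmetric group on `Fin n`. -/
noncomputable def fullCycles (n : ℕ) : Finset (Equiv.Perm (Fin n)) :=
  Finset.univ.filter fun σ => fullCycleType σ = {n}

/-- Unsigned Stirling number of the first kind: the number of permutations of `m`
elements with exactly `k` cycles. -/
noncomputable def stirling1 (m k : ℕ) : ℕ :=
  (Finset.univ.filter fun σ : Equiv.Perm (Fin m) => cycleCount σ = k).card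

/-- `m`-th harmonic number as a real. -/
noncomputable def Hsum (m : ℕ) : ℝ := ∑ i ∈ Finset.range m, (1 : ℝ) / (i + 1)

/-!
Removing the point `0` from a permutation of `Fin (m + 1)` (`Equiv.Perm.decomposeFin`) either
deletes a fixed point or shortens the cycle through `0` by one, so each permutation `e` of `Fin m`
arises once with `c(e) + 1` cycles and `m` times with `c(e)` cycles. Summing `k`, `(-1)^k` and
`(-1)^k k` over the cycle counts this way gives `∑ c(σ) = m! H_m`, `∑ (-1)^c(σ) = 0` and
`∑ (-1)^c(σ) c(σ) = (m-2)!` for `m ≥ 2`, and the even weighted sum is half of the first plus the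
last.
-/

namespace Equiv.Perm

variable {α : Type*} [Fintype α] [DecidableEq α]

theorem cycleCount_add_card_support (σ : Perm α) :
    cycleCount σ + #σ.support = Multiset.card σ.cycleType + Fintype.card α := by
  rw [cycleCount, add_assoc, Perm.support, card_filter_add_card_filter_not, card_univ]

theorem cycleCount_one : cycleCount (1 : Perm α) = Fintype.card α := by
  simpa using cycleCount_add_card_support (1 : Perm α)

theorem cycleCount_le_card (σ : Perm α) : cycleCount σ ≤ Fintype.card α := by
  have h := Multiset.card_nsmul_le_sum fun _ (hk : _ ∈ σ.cycleType) => two_le_of_mem_cycleType hk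
  rw [smul_eq_mul, sum_cycleType] at h
  have := cycleCount_add_card_support σ
  omega

theorem one_le_cycleCount [Nonempty α] (σ : Perm α) : 1 ≤ cycleCount σ := by
  by_cases hσ : σ = 1
  · rw [hσ, cycleCount_one]; exact Fintype.card_pos
  · rw [cycleCount]
    have := Multiset.card_pos.2 (cycleType_eq_zero.not.2 hσ)
    omega

theorem IsCycle.cycleCount_add_card_support {c : Perm α} (hc : c.IsCycle) :
    cycleCount c + #c.support = Fintype.card α + 1 := by
  rw [Perm.cycleCount_add_card_support, hc.cycleType, Multiset.card_singleton, add_comm]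

theorem Disjoint.cycleCount_mul {σ τ : Perm α} (h : σ.Disjoint τ) :
    cycleCount (σ * τ) + Fintype.card α = cycleCount σ + cycleCount τ := by
  have hστ := cycleCount_add_card_support (σ * τ)
  rw [h.cycleType_mul, Multiset.card_add, h.support_mul,
    card_union_of_disjoint (disjoint_iff_disjoint_support.1 h)] at hστ
  have := cycleCount_add_card_support σ
  have := cycleCount_add_card_support τ
  omega

theorem cycleCount_swap_mul_of_apply_apply_ne {π : Perm α} {a : α} (h₁ : π a ≠ a)
    (h₂ : π (π a) ≠ a) : cycleCount (swap a (π a) * π) = cycleCount π + 1 := by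
  -- `π = c * d` with `c` the cycle through `a`; the swap cuts `a` out of `c` and leaves `d` alone.
  set c := π.cycleOf a
  have hc : c.IsCycle := isCycle_cycleOf π h₁
  have hca : c a = π a := cycleOf_apply_self π a
  have hcca : c (c a) = π (π a) := by rw [hca, cycleOf_apply_apply_self]
  have hdc : (π * c⁻¹).Disjoint c :=
    disjoint_mul_inv_of_mem_cycleFactorsFinset (cycleOf_mem_cycleFactorsFinset_iff.2
      (mem_support.2 h₁))
  have hπ : π = c * (π * c⁻¹) := by rw [← hdc.commute.eq, inv_mul_cancel_right]
  have hsupp : (swap a (c a) * c).support = c.support \ {a} :=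
    support_swap_mul_eq c a (hcca ▸ h₂)
  have hc' : (swap a (c a) * c).IsCycle := hc.swap_mul (hca ▸ h₁) (hcca ▸ h₂)
  have hdc' : (swap a (c a) * c).Disjoint (π * c⁻¹) :=
    hdc.symm.mono (hsupp ▸ sdiff_subset) le_rfl
  have ha : a ∈ c.support := mem_support.2 (hca ▸ h₁)
  have hcard : #(swap a (c a) * c).support + 1 = #c.support := by
    rw [hsupp, sdiff_singleton_eq_erase, card_erase_add_one ha]
  have e₁ := Disjoint.cycleCount_mul hdc.symm
  have e₂ := hdc'.cycleCount_mul
  have e₃ := hc.cycleCount_add_card_support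
  have e₄ := hc'.cycleCount_add_card_support
  rw [← hπ] at e₁
  have hprod : swap a (c a) * c * (π * c⁻¹) = swap a (π a) * π := by rw [hca, mul_assoc, ← hπ]
  rw [hprod] at e₂
  omega

theorem cycleCount_swap_mul_add_one_of_apply_eq_self {σ : Perm α} {a b : α} (ha : σ a = a)
    (hab : a ≠ b) : cycleCount (swap a b * σ) + 1 = cycleCount σ := by
  by_cases hb : σ b = b
  · have hd : (swap a b).Disjoint σ := by
      intro x
      rcases eq_or_ne x a with rfl | hxa
      · exact .inr ha
      rcases eq_or_ne x b with rfl | hxb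
      · exact .inr hb
      exact .inl (swap_apply_of_ne_of_ne hxa hxb)
    have e₁ := hd.cycleCount_mul
    have e₂ := (isCycle_swap hab).cycleCount_add_card_support
    rw [card_support_swap hab] at e₂
    omega
  · set π := swap a b * σ
    have hπa : π a = b := by simp [π, ha]
    have hσb : σ b ≠ a := fun h => hab (σ.injective (ha.trans h.symm))
    have hπb : π b = σ b := by simp [π, swap_apply_of_ne_of_ne hσb hb]
    have hσ : swap a (π a) * π = σ := by rw [hπa, ← mul_assoc, swap_mul_self, one_mul]
    have := cycleCount_swap_mul_of_apply_apply_ne (π := π) (a := a) (by rwa [hπa, ne_comm])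
      (by rwa [hπa, hπb])
    rw [hσ] at this
    omega

theorem cycleCount_extendDomain {β : Type*} [Fintype β] [DecidableEq β] {p : β → Prop}
    [DecidablePred p] (f : α ≃ Subtype p) (g : Perm α) :
    cycleCount (g.extendDomain f) + Fintype.card α = cycleCount g + Fintype.card β := by
  have e₁ := cycleCount_add_card_support (g.extendDomain f)
  have e₂ := cycleCount_add_card_support g
  rw [cycleType_extendDomain, card_support_extend_domain] at e₁
  omega

theorem decomposeFin_symm_zero {n : ℕ} (e : Perm (Fin n)) :
    decomposeFin.symm (0, e) = e.extendDomain (finSuccAboveEquiv 0) := by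
  have hsucc (i : Fin n) : (finSuccAboveEquiv 0 i : Fin (n + 1)) = i.succ := by
    simp [finSuccAboveEquiv_apply]
  refine Equiv.ext fun x => Fin.cases ?_ (fun i => ?_) x
  · rw [decomposeFin_symm_apply_zero, extendDomain_apply_not_subtype _ _ (by simp)]
  · rw [decomposeFin_symm_apply_succ, swap_self, Equiv.refl_apply, ← hsucc, ← hsucc,
      extendDomain_apply_image]

theorem decomposeFin_symm_eq_swap_mul {n : ℕ} (p : Fin (n + 1)) (e : Perm (Fin n)) :
    decomposeFin.symm (p, e) = swap 0 p * decomposeFin.symm (0, e) := by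
  refine Equiv.ext fun x => Fin.cases ?_ (fun i => ?_) x
  · rw [Perm.mul_apply, decomposeFin_symm_apply_zero, decomposeFin_symm_apply_zero, swap_apply_left]
  · rw [Perm.mul_apply, decomposeFin_symm_apply_succ, decomposeFin_symm_apply_succ, swap_self,
      Equiv.refl_apply]

theorem cycleCount_decomposeFin_symm {n : ℕ} (p : Fin (n + 1)) (e : Perm (Fin n)) :
    cycleCount (decomposeFin.symm (p, e)) = cycleCount e + if p = 0 then 1 else 0 := by
  have h₀ : cycleCount (decomposeFin.symm (0, e)) = cycleCount e + 1 := by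
    have := cycleCount_extendDomain (finSuccAboveEquiv 0) e
    rw [← decomposeFin_symm_zero, Fintype.card_fin, Fintype.card_fin] at this
    omega
  rcases eq_or_ne p 0 with rfl | hp
  · rw [h₀, if_pos rfl]
  · have := cycleCount_swap_mul_add_one_of_apply_eq_self (decomposeFin_symm_apply_zero 0 e) hp.symm
    rw [← decomposeFin_symm_eq_swap_mul] at this
    rw [if_neg hp]
    omega

end Equiv.Perm

open Equiv Nat

theorem sum_perm_fin_succ_cycleCount {M : Type*} [AddCommMonoid M] (m : ℕ) (f : ℕ → M) :
    ∑ σ : Perm (Fin (m + 1)), f (cycleCount σ) =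
      ∑ e : Perm (Fin m), (f (cycleCount e + 1) + m • f (cycleCount e)) := by
  rw [univ_perm_fin_succ, sum_map, Fintype.sum_prod_type, Fin.sum_univ_succ]
  simp only [Equiv.coe_toEmbedding, Perm.cycleCount_decomposeFin_symm, if_true,
    Fin.succ_ne_zero, if_false, add_zero, sum_comm (γ := Fin m), sum_const, Finset.card_univ,
    Fintype.card_fin, sum_add_distrib]

theorem sum_cycleCount_perm_fin (m : ℕ) :
    ∑ σ : Perm (Fin m), (cycleCount σ : ℝ) = m ! * Hsum m := by
  induction m with
  | zero => simp [Hsum, Subsingleton.elim _ (1 : Perm (Fin 0)), Perm.cycleCount_one]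
  | succ m ih =>
    rw [sum_perm_fin_succ_cycleCount m Nat.cast]
    simp only [Nat.cast_add, Nat.cast_one, nsmul_eq_mul, sum_add_distrib, ← mul_sum, ih,
      sum_const, Finset.card_univ, Fintype.card_perm, Fintype.card_fin, mul_one]
    rw [Hsum, Hsum, sum_range_succ, factorial_succ]
    push_cast
    field_simp
    ring

theorem sum_neg_one_pow_cycleCount_perm_fin_add_two (m : ℕ) :
    ∑ σ : Perm (Fin (m + 2)), (-1 : ℝ) ^ cycleCount σ = 0 := by
  induction m with
  | zero =>
    rw [sum_perm_fin_succ_cycleCount]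
    simp [pow_succ]
  | succ m ih =>
    rw [sum_perm_fin_succ_cycleCount]
    have h (k : ℕ) : (-1 : ℝ) ^ (k + 1) + (m + 2 : ℕ) • (-1 : ℝ) ^ k = (m + 1) * (-1) ^ k := by
      rw [nsmul_eq_mul, pow_succ]; push_cast; ring
    simp only [h, ← mul_sum, ih, mul_zero]

theorem sum_neg_one_pow_mul_cycleCount_perm_fin_add_two (m : ℕ) :
    ∑ σ : Perm (Fin (m + 2)), (-1 : ℝ) ^ cycleCount σ * cycleCount σ = m ! := by
  induction m with
  | zero =>
    have h (σ : Perm (Fin 1)) : cycleCount σ = 1 := by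
      rw [Subsingleton.elim σ 1, Perm.cycleCount_one, Fintype.card_fin]
    rw [sum_perm_fin_succ_cycleCount 1 fun k => (-1 : ℝ) ^ k * k]
    norm_num [h]
  | succ m ih =>
    rw [sum_perm_fin_succ_cycleCount (m + 2) fun k => (-1 : ℝ) ^ k * k]
    have h (k : ℕ) : (-1 : ℝ) ^ (k + 1) * (k + 1 : ℕ) + (m + 2 : ℕ) • ((-1 : ℝ) ^ k * k) =
        (m + 1) * ((-1) ^ k * k) - (-1) ^ k := by
      rw [nsmul_eq_mul, pow_succ]; push_cast; ring
    simp only [h, sum_sub_distrib, ← mul_sum, ih, sum_neg_one_pow_cycleCount_perm_fin_add_two,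
      sub_zero, factorial_succ]
    push_cast
    ring

theorem sum_mul_stirling1 {m : ℕ} (hm : 0 < m) (g : ℕ → ℝ) :
    ∑ k ∈ Icc 1 m, g k * stirling1 m k = ∑ σ : Perm (Fin m), g (cycleCount σ) := by
  have : Nonempty (Fin m) := ⟨⟨0, hm⟩⟩
  rw [← sum_fiberwise_of_maps_to (g := cycleCount) (t := Icc 1 m) fun σ _ =>
    mem_Icc.2 ⟨σ.one_le_cycleCount, by simpa using σ.cycleCount_le_card⟩]
  refine sum_congr rfl fun k _ => ?_
  rw [stirling1, sum_congr rfl fun σ hσ => by rw [(mem_filter.1 hσ).2], sum_const, nsmul_eq_mul,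
    mul_comm]

/-- `∑_{k even, 1 ≤ k ≤ n+1} k·c(n+1,k) = ((n+1)!/2)(1/(n(n+1)) + H_{n+1})`. -/
theorem stirling_even_weighted_sum (n : ℕ) (hn : 1 ≤ n) :
    ∑ k ∈ (Finset.Icc 1 (n + 1)).filter (fun k => Even k),
        (k : ℝ) * (stirling1 (n + 1) k : ℝ) =
      ((Nat.factorial (n + 1) : ℝ) / 2) *
        (1 / ((n : ℝ) * ((n : ℝ) + 1)) + Hsum (n + 1)) := by
  obtain ⟨m, rfl⟩ := Nat.exists_eq_add_of_le' hn
  have hparity (k : ℕ) : (if Even k then (k : ℝ) else 0) = (k + (-1) ^ k * k) / 2 := by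
    rcases Nat.even_or_odd k with hk | hk
    · rw [if_pos hk, hk.neg_one_pow]; ring
    · rw [if_neg (Nat.not_even_iff_odd.2 hk), hk.neg_one_pow]; ring
  calc ∑ k ∈ (Icc 1 (m + 1 + 1)).filter (fun k => Even k), (k : ℝ) * stirling1 (m + 1 + 1) k
      = ∑ k ∈ Icc 1 (m + 1 + 1), (if Even k then (k : ℝ) else 0) * stirling1 (m + 1 + 1) k := by
        rw [sum_filter]; simp only [ite_mul, zero_mul]
    _ = ∑ σ : Perm (Fin (m + 1 + 1)), if Even (cycleCount σ) then (cycleCount σ : ℝ) else 0 :=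
        sum_mul_stirling1 (by omega) _
    _ = ((m + 2)! * Hsum (m + 2) + m !) / 2 := by
        simp only [hparity, ← sum_div, sum_add_distrib, sum_cycleCount_perm_fin,
          sum_neg_one_pow_mul_cycleCount_perm_fin_add_two]
    _ = _ := by
        rw [factorial_succ, factorial_succ]
        push_cast
        field_simp
        ring
end

section
/- For all integers n and i with 5 ≤ i ≤ n/2 and i odd, the ratio binomial(⌊n/2⌋, ⌊i/2⌋) / binomial(n, i−1) is at most 1/(2(n−1)). -/
/-- Key natural-number inequality: for `k ≥ 2` and `n ≥ 4k+2`,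
`2(n-1) * C(n/2, k) ≤ C(n, 2k)`. -/
lemma binom_ratio_aux (k : ℕ) (hk : 2 ≤ k) :
    ∀ n, 4*k+2 ≤ n → 2*(n-1) * ((n/2).choose k) ≤ n.choose (2*k) := by
  induction k, hk using Nat.le_induction with
  | base =>
    intro n hn
    obtain ⟨a, ha⟩ : ∃ a, n / 2 = 5 + a := ⟨n/2 - 5, by omega⟩
    obtain ⟨e, he1, he2⟩ : ∃ e, e ≤ 1 ∧ n = 2*(5+a) + e := ⟨n - 2*(n/2), by omega, by omega⟩
    rw [ha]
    have hb : (5+a).choose 2 * 2 = (5+a) * (4+a) := by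
      have h1 := Nat.choose_succ_right_eq (5+a) 1
      norm_num [Nat.choose_one_right] at h1
      omega
    have hc : n.choose 4 * 24 = n*(n-1)*(n-2)*(n-3) := by
      have h1 := Nat.choose_succ_right_eq n 3
      have h2 := Nat.choose_succ_right_eq n 2
      have h3 := Nat.choose_succ_right_eq n 1
      have h4 : Nat.choose n 1 = n := Nat.choose_one_right _
      rw [h4] at h3
      calc n.choose 4 * 24 = (n.choose 4 * 4) * 6 := by ring
        _ = (n.choose 3 * 3) * ((n-3) * 2) := by rw [h1]; ring
        _ = (n.choose 2 * 2) * ((n-2)*(n-3)) := by rw [h2]; ring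
        _ = _ := by rw [h3]; ring
    subst he2
    rw [show 2*(5+a)+e-1 = 9+2*a+e from by omega] at *
    rw [show 2*(5+a)+e-2 = 8+2*a+e from by omega] at *
    rw [show 2*(5+a)+e-3 = 7+2*a+e from by omega] at *
    set b2 := (5+a).choose 2 with hb2
    set c4 := (2*(5+a)+e).choose (2*2) with hc4
    have h22 : (2:ℕ)*2 = 4 := rfl
    rw [h22] at hc4
    refine Nat.le_of_mul_le_mul_right ?_ (show 0 < 24 by norm_num)
    calc 2*(9+2*a+e) * b2 * 24 = (b2 * 2) * ((9+2*a+e) * 24) := by ring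
      _ = (5+a)*(4+a)*((9+2*a+e)*24) := by rw [hb]
      _ = ((2*a+10)*((2*a+8)*6))*(9+2*a+e) := by ring
      _ ≤ ((2*a+10+e)*((2*a+8+e)*(7+2*a+e)))*(9+2*a+e) :=
          Nat.mul_le_mul_right _ (Nat.mul_le_mul (by omega) (Nat.mul_le_mul (by omega) (by omega)))
      _ = (2*(5+a)+e)*(9+2*a+e)*(8+2*a+e)*(7+2*a+e) := by ring
      _ = c4 * 24 := by rw [hc]
  | succ k hk IH =>
    intro n hn
    have hIH := IH n (by omega)
    obtain ⟨a, ha⟩ : ∃ a, n / 2 = 2*k+3 + a := ⟨n/2 - (2*k+3), by omega⟩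
    obtain ⟨e, he1, he2⟩ : ∃ e, e ≤ 1 ∧ n = 2*(2*k+3+a) + e := ⟨n - 2*(n/2), by omega, by omega⟩
    rw [ha] at hIH ⊢
    have h1 : (2*k+3+a).choose (k+1) * (k+1) = (2*k+3+a).choose k * (k+3+a) := by
      have := Nat.choose_succ_right_eq (2*k+3+a) k
      rwa [show 2*k+3+a-k = k+3+a from by omega] at this
    have h2 : n.choose (2*k+1) * (2*k+1) = n.choose (2*k) * (n - 2*k) := Nat.choose_succ_right_eq n (2*k)
    have h3 : n.choose (2*k+2) * (2*k+2) = n.choose (2*k+1) * (n - (2*k+1)) := Nat.choose_succ_right_eq n (2*k+1)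
    subst he2
    rw [show 2*(2*k+3+a)+e-1 = 4*k+5+2*a+e from by omega] at *
    rw [show 2*(2*k+3+a)+e-2*k = 2*k+6+2*a+e from by omega] at *
    rw [show 2*(2*k+3+a)+e-(2*k+1) = 2*k+5+2*a+e from by omega] at *
    rw [show 2*(k+1) = 2*k+2 from by ring]
    set N := 2*(2*k+3+a)+e with hN
    set c1 := (2*k+3+a).choose k
    set c2 := (2*k+3+a).choose (k+1)
    set d0 := N.choose (2*k)
    set d1 := N.choose (2*k+1)
    set d2 := N.choose (2*k+2)
    refine Nat.le_of_mul_le_mul_right ?_ (show 0 < (k+1)*((2*k+1)*(2*k+2)) by positivity)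
    calc 2*(4*k+5+2*a+e) * c2 * ((k+1)*((2*k+1)*(2*k+2)))
        = (c2 * (k+1)) * (2*(4*k+5+2*a+e)*((2*k+1)*(2*k+2))) := by ring
      _ = (2*(4*k+5+2*a+e)*c1) * ((k+3+a)*((2*k+1)*(2*k+2))) := by rw [h1]; ring
      _ ≤ d0 * ((2*k+6+2*a+e)*((2*k+5+2*a+e)*(k+1))) := by
          apply Nat.mul_le_mul hIH
          calc (k+3+a)*((2*k+1)*(2*k+2)) = ((2*k+6+2*a)*(2*k+1))*(k+1) := by ring
            _ ≤ ((2*k+6+2*a+e)*(2*k+5+2*a+e))*(k+1) :=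
                Nat.mul_le_mul_right _ (Nat.mul_le_mul (by omega) (by omega))
            _ = (2*k+6+2*a+e)*((2*k+5+2*a+e)*(k+1)) := by ring
      _ = (d0 * (2*k+6+2*a+e)) * ((2*k+5+2*a+e)*(k+1)) := by ring
      _ = (d1 * (2*k+1)) * ((2*k+5+2*a+e)*(k+1)) := by rw [h2]
      _ = (d1 * (2*k+5+2*a+e)) * ((2*k+1)*(k+1)) := by ring
      _ = (d2 * (2*k+2)) * ((2*k+1)*(k+1)) := by rw [h3]
      _ = d2 * ((k+1)*((2*k+1)*(2*k+2))) := by ring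

/-- For odd `i` with `5 ≤ i ≤ n/2`, `binom(⌊n/2⌋, ⌊i/2⌋)/binom(n, i-1) ≤ 1/(2(n-1))`. -/
theorem binom_ratio_odd (n i : ℕ) (h5 : 5 ≤ i) (hin : i ≤ n / 2) (ho : Odd i) :
    ((n / 2).choose (i / 2) : ℝ) / (n.choose (i - 1) : ℝ) ≤ 1 / (2 * ((n : ℝ) - 1)) := by
  obtain ⟨k, hk⟩ := ho
  have hk2 : 2 ≤ k := by omega
  have hn : 4*k+2 ≤ n := by omega
  have key := binom_ratio_aux k hk2 n hn
  rw [show i / 2 = k from by omega, show i - 1 = 2*k from by omega] at *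
  have hcpos : 0 < n.choose (2*k) := Nat.choose_pos (by omega)
  have hcpos' : (0:ℝ) < n.choose (2*k) := by exact_mod_cast hcpos
  have hnpos : (0:ℝ) < 2 * ((n:ℝ) - 1) := by
    have : (10:ℝ) ≤ n := by exact_mod_cast (show (10:ℕ) ≤ n from by omega)
    linarith
  rw [div_le_div_iff₀ hcpos' hnpos]
  have key' : ((2*(n-1) * ((n/2).choose k) : ℕ) : ℝ) ≤ (n.choose (2*k) : ℝ) := by exact_mod_cast key
  push_cast [Nat.cast_sub (show 1 ≤ n from by omega)] at key'
  linarith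
end

section
/- Let λ = (λ_1,...,λ_k) be a partition of n with all parts λ_i ≥ 2, and for each i let p_i denote the number of nonempty subsets S ⊆ {1,...,k} with Σ_{j∈S} λ_j = i. Then p_2/binomial(n,1) + p_3/binomial(n,2) ≤ 1/2. -/
open Finset

lemma subpartition_aux_card (k : ℕ) (l : Fin k → ℕ) (h2 : ∀ i, 2 ≤ l i) (m : ℕ)
    (hm : m = 2 ∨ m = 3) :
    ((Finset.univ : Finset (Finset (Fin k))).filter fun S => ∑ j ∈ S, l j = m).card
      = ((Finset.univ : Finset (Fin k)).filter fun i => l i = m).card := by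
  refine (Finset.card_bij (fun i _ => ({i} : Finset (Fin k))) ?_ ?_ ?_).symm
  · intro i hi
    simp only [mem_filter, mem_univ, true_and] at hi ⊢
    simp [hi]
  · intro i hi j hj h
    simpa using h
  · intro S hS
    simp only [mem_filter, mem_univ, true_and] at hS
    have hne : S.Nonempty := by
      rcases S.eq_empty_or_nonempty with h | h
      · exfalso; subst h; simp at hS; omega
      · exact h
    obtain ⟨i, hi⟩ := hne
    have hSi : S = {i} := by
      by_contra h
      obtain ⟨j, hj, hji⟩ : ∃ j ∈ S, j ≠ i := by
        by_contra hc
        push_neg at hc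
        exact h (Finset.eq_singleton_iff_unique_mem.2 ⟨hi, hc⟩)
      have hsub : ({i, j} : Finset (Fin k)) ⊆ S := by
        intro x hx
        simp only [mem_insert, mem_singleton] at hx
        rcases hx with h | h
        · exact h ▸ hi
        · exact h ▸ hj
      have hle := Finset.sum_le_sum_of_subset (f := l) hsub
      rw [Finset.sum_pair (Ne.symm hji)] at hle
      have := h2 i; have := h2 j
      omega
    refine ⟨i, ?_, hSi.symm⟩
    simp only [mem_filter, mem_univ, true_and]
    rw [hSi, Finset.sum_singleton] at hS
    exact hS

/-- Let `λ = (λ_1,...,λ_k)` be a partition of `n` with all parts at least `2`, and let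
`p_i` be the number of index subsets whose parts sum to `i`.  Then
`p_2/binom(n,1) + p_3/binom(n,2) ≤ 1/2`. -/
theorem subpartition_small_weight_bound (n k : ℕ) (l : Fin k → ℕ)
    (hmono : Antitone l) (h2 : ∀ i, 2 ≤ l i) (hsum : ∑ i, l i = n) :
    (((Finset.univ : Finset (Finset (Fin k))).filter fun S => ∑ j ∈ S, l j = 2).card : ℝ)
        / (n.choose 1 : ℝ)
      + (((Finset.univ : Finset (Finset (Fin k))).filter fun S => ∑ j ∈ S, l j = 3).card : ℝ)
        / (n.choose 2 : ℝ) ≤ 1 / 2 := by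
  rw [subpartition_aux_card k l h2 2 (Or.inl rfl), subpartition_aux_card k l h2 3 (Or.inr rfl)]
  set a := ((Finset.univ : Finset (Fin k)).filter fun i => l i = 2).card with ha
  set b := ((Finset.univ : Finset (Fin k)).filter fun i => l i = 3).card with hb
  -- key inequality: 2a + 3b ≤ n
  have hkey : 2 * a + 3 * b ≤ n := by
    rw [← hsum]
    have hdisj : Disjoint ((Finset.univ : Finset (Fin k)).filter fun i => l i = 2)
        ((Finset.univ : Finset (Fin k)).filter fun i => l i = 3) := by
      rw [Finset.disjoint_filter]
      intro x _ hx2 hx3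
      omega
    calc 2 * a + 3 * b
        = (∑ i ∈ (Finset.univ : Finset (Fin k)).filter (fun i => l i = 2), l i)
          + ∑ i ∈ (Finset.univ : Finset (Fin k)).filter (fun i => l i = 3), l i := by
          rw [Finset.sum_congr rfl (fun i hi => (Finset.mem_filter.1 hi).2),
            Finset.sum_congr rfl (fun i hi => (Finset.mem_filter.1 hi).2)]
          simp [ha, hb, Finset.sum_const, mul_comm]
      _ = ∑ i ∈ ((Finset.univ : Finset (Fin k)).filter (fun i => l i = 2))
            ∪ ((Finset.univ : Finset (Fin k)).filter fun i => l i = 3), l i := by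
          rw [Finset.sum_union hdisj]
      _ ≤ ∑ i, l i := Finset.sum_le_sum_of_subset (Finset.subset_univ _)
  rcases Nat.eq_zero_or_pos (a + b) with hab | hab
  · have ha0 : a = 0 := by omega
    have hb0 : b = 0 := by omega
    rw [ha0, hb0]
    norm_num
  -- now n ≥ 2
  have hn2 : 2 ≤ n := by omega
  have hn3 : b ≠ 0 → 3 ≤ n := by intro h; omega
  rw [Nat.choose_one_right, Nat.cast_choose_two]
  have hA : (0:ℝ) ≤ a := Nat.cast_nonneg a
  have hB : (0:ℝ) ≤ b := Nat.cast_nonneg b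
  have hN : (2:ℝ) ≤ n := by exact_mod_cast hn2
  have hKey : 2 * (a:ℝ) + 3 * b ≤ n := by exact_mod_cast hkey
  have hkey2 : 2 * (a:ℝ) * ((n:ℝ) - 1) + 4 * b ≤ n * (n - 1) := by
    rcases Nat.eq_zero_or_pos b with hb0 | hbpos
    · rw [hb0]; push_cast
      nlinarith
    · have h3 : (3:ℝ) ≤ n := by exact_mod_cast hn3 (by omega)
      nlinarith
  have hNpos : (0:ℝ) < n := by linarith
  have hN1pos : (0:ℝ) < (n:ℝ) - 1 := by linarith
  rw [div_add_div _ _ (ne_of_gt hNpos) (by positivity), div_le_div_iff₀ (by positivity) (by norm_num)]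
  ring_nf
  nlinarith [mul_pos hNpos hN1pos]
end

section
/- Let C = u_1u_2...u_k be a cycle in a graph G in which every vertex u_i has degree at least 3. Under a uniformly random orientable embedding of G, the probability that C is a facial walk equals 2·∏_{i=1}^k 1/(deg(u_i)−1). -/
open Finset
open scoped Classical

/-- The rotation systems (i.e., orientable embeddings) of the multigraph whose darts are
`D` and where dart `d` has tail `vert d`: permutations of the darts preserving tails and
acting as a single cycle on the darts at each vertex. -/
noncomputable def rotations {D V : Type*} [Fintype D] [DecidableEq D] (vert : D → V) :
    Finset (Equiv.Perm D) :=
  Finset.univ.filter fun ρ =>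
    (∀ d, vert (ρ d) = vert d) ∧
    ∀ d d', vert d = vert d' → ∃ m : ℕ, (ρ ^ m) d = d'

/-- The degree of a vertex: the number of darts with tail `u`. -/
noncomputable def deg {D V : Type*} [Fintype D] (vert : D → V) (u : V) : ℕ :=
  (Finset.univ.filter fun d => vert d = u).card

/-!
Let `b i` be the dart at `u_i` pointing to `u_{i-1}`, so that the two events are
`∀ i, ρ (a i) = b i` and `∀ i, ρ (b i) = a i`. Conjugating a rotation by a tail-preserving
involution gives a rotation, and for two families `c`, `c'` of darts at the `u_i` avoiding the
`a i`, the involution swapping `c i ↔ c' i` at every `u_i` fixes the `a i`. So all the sets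
`{ρ | ∀ i, ρ (a i) = c i}` have the same size, and since `ρ (a i) ≠ a i` they partition the
rotations into `∏ (deg u_i - 1)` classes: each event has probability `∏ 1 / (deg u_i - 1)`.
The events are disjoint because a rotation with `ρ a = b` and `ρ b = a` has the orbit `{a, b}`,
while the darts at a vertex of degree at least `3` form a single orbit.
-/

namespace Equiv

lemma apply_swap_apply_of_apply_eq {α β : Type*} [DecidableEq α] {f : α → β} {x y : α}
    (h : f x = f y) (d : α) : f (swap x y d) = f d := by
  rcases eq_or_ne d x with rfl | hx
  · rw [swap_apply_left, h]
  rcases eq_or_ne d y with rfl | hy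
  · rw [swap_apply_right, h]
  · rw [swap_apply_of_ne_of_ne hx hy]

lemma Perm.apply_inv_apply_eq {α β : Type*} {f : α → β} {S : Perm α}
    (hS : ∀ x, f (S x) = f x) (x : α) : f (S⁻¹ x) = f x := by
  simpa using (hS (S⁻¹ x)).symm

end Equiv

lemma List.exists_formPerm_pow_apply_eq {α : Type*} [DecidableEq α] {l : List α}
    (hl : l.Nodup) {x y : α} (hx : x ∈ l) (hy : y ∈ l) : ∃ m : ℕ, (l.formPerm ^ m) x = y := by
  obtain ⟨i, hi, rfl⟩ := List.mem_iff_getElem.1 hx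
  obtain ⟨j, hj, rfl⟩ := List.mem_iff_getElem.1 hy
  refine ⟨j + l.length - i, ?_⟩
  rw [List.formPerm_pow_apply_getElem l hl _ i hi]
  congr 1
  rw [show i + (j + l.length - i) = j + l.length by omega, Nat.add_mod_right, Nat.mod_eq_of_lt hj]

section Rotations

variable {D V : Type*} [Fintype D] [DecidableEq D] {vert : D → V} {ρ : Equiv.Perm D}

lemma mem_rotations : ρ ∈ rotations vert ↔ (∀ d, vert (ρ d) = vert d) ∧
    ∀ d d', vert d = vert d' → ∃ m : ℕ, (ρ ^ m) d = d' := by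
  simp [rotations]

lemma conj_mem_rotations {S : Equiv.Perm D} (hS : ∀ d, vert (S d) = vert d)
    (hρ : ρ ∈ rotations vert) : S * ρ * S⁻¹ ∈ rotations vert := by
  obtain ⟨hρv, hρt⟩ := mem_rotations.1 hρ
  have hS' := Equiv.Perm.apply_inv_apply_eq hS
  refine mem_rotations.2 ⟨fun d => by simp only [Equiv.Perm.mul_apply, hS, hρv, hS'], ?_⟩
  intro d d' h
  obtain ⟨m, hm⟩ := hρt (S⁻¹ d) (S⁻¹ d') (by rw [hS', hS', h])
  exact ⟨m, by simpa [conj_pow] using congrArg S hm⟩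

lemma conj_mem_rotations_iff {S : Equiv.Perm D} (hS : ∀ d, vert (S d) = vert d) :
    S * ρ * S⁻¹ ∈ rotations vert ↔ ρ ∈ rotations vert := by
  refine ⟨fun h => ?_, conj_mem_rotations hS⟩
  simpa [mul_assoc] using conj_mem_rotations (Equiv.Perm.apply_inv_apply_eq hS) h

lemma apply_ne_self_of_mem_rotations (hρ : ρ ∈ rotations vert) {d : D}
    (hd : 2 ≤ deg vert (vert d)) : ρ d ≠ d := by
  obtain ⟨d', hd', hne⟩ := Finset.exists_mem_ne hd d
  obtain ⟨m, hm⟩ := (mem_rotations.1 hρ).2 d d' (Finset.mem_filter.1 hd').2.symm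
  exact fun h => hne (hm.symm.trans (Equiv.Perm.pow_apply_eq_self_of_apply_eq_self h m))

lemma deg_le_two_of_mem_rotations (hρ : ρ ∈ rotations vert) {x y : D} (hxy : ρ x = y)
    (hyx : ρ y = x) : deg vert (vert x) ≤ 2 := by
  have horbit : ∀ m : ℕ, (ρ ^ m) x ∈ ({x, y} : Finset D) := by
    intro m
    induction m with
    | zero => simp
    | succ m ih =>
      rw [pow_succ', Equiv.Perm.mul_apply]
      rcases Finset.mem_insert.1 ih with h | h
      · simp [h, hxy]
      · simp [Finset.mem_singleton.1 h, hyx]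
  have hsub : (Finset.univ.filter fun d => vert d = vert x) ⊆ {x, y} := fun d hd => by
    obtain ⟨m, rfl⟩ := (mem_rotations.1 hρ).2 x d (Finset.mem_filter.1 hd).2.symm
    exact horbit m
  exact (Finset.card_le_card hsub).trans Finset.card_le_two

lemma rotations_nonempty (vert : D → V) : (rotations vert).Nonempty := by
  let l : V → List D := fun v => (Finset.univ.filter fun d => vert d = v).toList
  have mem_l : ∀ {v d}, d ∈ l v ↔ vert d = v := by simp [l]
  have hmaps : ∀ d, vert ((l (vert d)).formPerm d) = vert d := fun d =>
    mem_l.1 (List.formPerm_apply_mem_of_mem (mem_l.2 rfl))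
  let f : D → D := fun d => (l (vert d)).formPerm d
  have hf : f.Injective := by
    intro d d' h
    have hv : vert d = vert d' := by rw [← hmaps d, ← hmaps d']; exact congrArg vert h
    simp only [f, hv] at h
    exact (l _).formPerm.injective h
  let ρ := Equiv.ofBijective f hf.bijective_of_finite
  have hpow : ∀ (m : ℕ) d, (ρ ^ m) d = ((l (vert d)).formPerm ^ m) d := by
    intro m
    induction m with
    | zero => simp
    | succ m ih =>
      intro d
      rw [pow_succ, Equiv.Perm.mul_apply, ih, pow_succ, Equiv.Perm.mul_apply]
      simp only [ρ, Equiv.ofBijective_apply, f, hmaps]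
  refine ⟨ρ, mem_rotations.2 ⟨hmaps, fun d d' h => ?_⟩⟩
  simp only [hpow]
  exact List.exists_formPerm_pow_apply_eq (Finset.nodup_toList _) (mem_l.2 rfl) (mem_l.2 h.symm)

end Rotations

lemma exists_perm_eq_swap_on_fibers {D V ι : Type*} [DecidableEq D] {vert : D → V}
    {u : ι → V} (hu : u.Injective) {c c' : ι → D} (hc : ∀ i, vert (c i) = u i) (hc' : ∀ i, vert (c' i) = u i) :
    ∃ S : Equiv.Perm D, (∀ d, vert (S d) = vert d) ∧
      ∀ i d, vert d = u i → S d = Equiv.swap (c i) (c' i) d := by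
  let f : D → D := fun d =>
    if h : ∃ i, u i = vert d then Equiv.swap (c h.choose) (c' h.choose) d else d
  have hf_at : ∀ i d, vert d = u i → f d = Equiv.swap (c i) (c' i) d := by
    intro i d hd
    have h : ∃ i, u i = vert d := ⟨i, hd.symm⟩
    simp only [f, dif_pos h, hu (h.choose_spec.trans hd)]
  have hvert_swap : ∀ i d, vert (Equiv.swap (c i) (c' i) d) = vert d := fun i =>
    Equiv.apply_swap_apply_of_apply_eq ((hc i).trans (hc' i).symm)
  have hf_off : ∀ d, (¬ ∃ i, u i = vert d) → f d = d := fun d h => dif_neg h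
  have hvert_f : ∀ d, vert (f d) = vert d := by
    intro d
    by_cases h : ∃ i, u i = vert d
    · obtain ⟨i, hi⟩ := h
      rw [hf_at i d hi.symm, hvert_swap]
    · rw [hf_off d h]
  have hinv : Function.Involutive f := by
    intro d
    by_cases h : ∃ i, u i = vert d
    · obtain ⟨i, hi⟩ := h
      rw [hf_at i (f d) ((hvert_f d).trans hi.symm), hf_at i d hi.symm, Equiv.swap_apply_self]
    · rw [hf_off d h, hf_off d h]
  exact ⟨hinv.toPerm, hvert_f, hf_at⟩

section Counting

variable {D V ι : Type*} [Fintype D] [DecidableEq D] [Fintype ι] {vert : D → V}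

lemma card_filter_rotations_apply_eq_congr {a c c' : ι → D}
    (ha : Function.Injective fun i => vert (a i))
    (hc : ∀ i, vert (c i) = vert (a i)) (hc' : ∀ i, vert (c' i) = vert (a i))
    (hac : ∀ i, a i ≠ c i) (hac' : ∀ i, a i ≠ c' i) :
    #{ρ ∈ rotations vert | ∀ i, ρ (a i) = c i} = #{ρ ∈ rotations vert | ∀ i, ρ (a i) = c' i} := by
  obtain ⟨S, hSv, hS⟩ := exists_perm_eq_swap_on_fibers ha hc hc'
  have hSa : ∀ i, S (a i) = a i := fun i => by
    rw [hS i _ rfl, Equiv.swap_apply_of_ne_of_ne (hac i) (hac' i)]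
  have hSc : ∀ i, S (c i) = c' i := fun i => by rw [hS i _ (hc i), Equiv.swap_apply_left]
  refine Finset.card_equiv (MulAut.conj S).toEquiv fun ρ => ?_
  have hSa' : ∀ i, S⁻¹ (a i) = a i := fun i => Equiv.Perm.inv_eq_iff_eq.2 (hSa i).symm
  simp only [Finset.mem_filter, MulEquiv.toEquiv_eq_coe, EquivLike.coe_coe, MulAut.conj_apply,
    conj_mem_rotations_iff hSv, Equiv.Perm.mul_apply, hSa', ← hSc, S.injective.eq_iff]

theorem card_rotations_eq_card_filter_mul_prod {a b : ι → D}
    (ha : Function.Injective fun i => vert (a i)) (hb : ∀ i, vert (b i) = vert (a i))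
    (hab : ∀ i, a i ≠ b i) (hdeg : ∀ i, 2 ≤ deg vert (vert (a i))) :
    #(rotations vert) =
      #{ρ ∈ rotations vert | ∀ i, ρ (a i) = b i} * ∏ i, (deg vert (vert (a i)) - 1) := by
  let P := Fintype.piFinset fun i => (Finset.univ.filter fun d => vert d = vert (a i)).erase (a i)
  have mem_P : ∀ {c : ι → D}, c ∈ P ↔ ∀ i, c i ≠ a i ∧ vert (c i) = vert (a i) := by
    simp [P]
  have hmaps : ∀ ρ ∈ rotations vert, (fun i => ρ (a i)) ∈ P := fun ρ hρ =>
    mem_P.2 fun i => ⟨apply_ne_self_of_mem_rotations hρ (hdeg i), (mem_rotations.1 hρ).1 _⟩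
  calc #(rotations vert)
      = ∑ c ∈ P, #{ρ ∈ rotations vert | (fun i => ρ (a i)) = c} :=
        Finset.card_eq_sum_card_fiberwise hmaps
    _ = ∑ _c ∈ P, #{ρ ∈ rotations vert | ∀ i, ρ (a i) = b i} := by
        refine Finset.sum_congr rfl fun c hc => ?_
        simp only [funext_iff]
        exact card_filter_rotations_apply_eq_congr ha (fun i => (mem_P.1 hc i).2) hb
          (fun i => (mem_P.1 hc i).1.symm) hab
    _ = _ := by
        rw [Finset.sum_const, smul_eq_mul, mul_comm, Fintype.card_piFinset]
        congr 1
        exact Finset.prod_congr rfl fun i _ => Finset.card_erase_of_mem (by simp)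

lemma disjoint_filter_rotations_apply_eq {a b : ι → D} (i : ι)
    (hdeg : 3 ≤ deg vert (vert (a i))) :
    Disjoint {ρ ∈ rotations vert | ∀ i, ρ (a i) = b i}
      {ρ ∈ rotations vert | ∀ i, ρ (b i) = a i} :=
  Finset.disjoint_filter.2 fun _ hρ h1 h2 =>
    (deg_le_two_of_mem_rotations hρ (h1 i) (h2 i)).not_gt hdeg

theorem card_filter_or_div_card_rotations [Nonempty ι] {a b : ι → D}
    (ha : Function.Injective fun i => vert (a i)) (hb : ∀ i, vert (b i) = vert (a i))
    (hab : ∀ i, a i ≠ b i) (hdeg : ∀ i, 3 ≤ deg vert (vert (a i))) :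
    (#{ρ ∈ rotations vert | (∀ i, ρ (a i) = b i) ∨ ∀ i, ρ (b i) = a i} : ℝ) /
        #(rotations vert) =
      2 * ∏ i, 1 / ((deg vert (vert (a i)) : ℝ) - 1) := by
  have hdeg2 : ∀ i, 2 ≤ deg vert (vert (a i)) := fun i => by have := hdeg i; omega
  have hcount_ab := card_rotations_eq_card_filter_mul_prod ha hb hab hdeg2
  have hcount_ba := card_rotations_eq_card_filter_mul_prod (a := b) (b := a)
    (by simpa only [hb] using ha) (fun i => (hb i).symm) (fun i => (hab i).symm)
    (by simpa only [hb] using hdeg2)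
  simp only [hb] at hcount_ba
  set P := ∏ i, (deg vert (vert (a i)) - 1)
  set E := #{ρ ∈ rotations vert | ∀ i, ρ (a i) = b i}
  have hP : 0 < P := Finset.prod_pos fun i _ => by have := hdeg i; omega
  have hE : 0 < E := Nat.pos_of_mul_pos_right (hcount_ab ▸ (rotations_nonempty vert).card_pos)
  have hE' : #{ρ ∈ rotations vert | ∀ i, ρ (b i) = a i} = E :=
    Nat.eq_of_mul_eq_mul_right hP (hcount_ba.symm.trans hcount_ab)
  obtain ⟨i₀⟩ := ‹Nonempty ι›
  have hdisj := disjoint_filter_rotations_apply_eq (b := b) i₀ (hdeg i₀)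
  have hprod : ∏ i, 1 / ((deg vert (vert (a i)) : ℝ) - 1) = 1 / P := by
    rw [Nat.cast_prod, one_div, ← Finset.prod_inv_distrib]
    refine Finset.prod_congr rfl fun i _ => ?_
    rw [Nat.cast_sub (by have := hdeg i; omega), Nat.cast_one, one_div]
  rw [Finset.filter_or, Finset.card_union_of_disjoint hdisj, hE', hcount_ab, hprod]
  have : (0 : ℝ) < P := by exact_mod_cast hP
  have : (0 : ℝ) < E := by exact_mod_cast hE
  push_cast
  field_simp
  ring

end Counting

lemma ZMod.add_one_ne_sub_one {k : ℕ} (hk : 3 ≤ k) (i : ZMod k) : i + 1 ≠ i - 1 := by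
  intro h
  have h2 : ((2 : ℕ) : ZMod k) = 0 := by
    push_cast
    linear_combination h
  have := Nat.le_of_dvd two_pos ((ZMod.natCast_eq_zero_iff 2 k).1 h2)
  omega

theorem probability_cycle_is_face_general {D V : Type*} [Fintype D] [DecidableEq D]
    (vert : D → V) (inv : Equiv.Perm D)
    (hinv : ∀ d, inv (inv d) = d)
    (k : ℕ) [NeZero k] (hk : 3 ≤ k) (a : ZMod k → D)
    (conn : ∀ i, vert (inv (a i)) = vert (a (i + 1)))
    (injv : Function.Injective fun i => vert (a i))
    (hdeg : ∀ i, 3 ≤ deg vert (vert (a i))) :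
    (((rotations vert).filter fun ρ =>
          (∀ i, ρ (a i) = inv (a (i - 1))) ∨ (∀ i, ρ (inv (a (i - 1))) = a i)).card : ℝ) /
        ((rotations vert).card : ℝ) =
      2 * ∏ i : ZMod k, 1 / ((deg vert (vert (a i)) : ℝ) - 1) := by
  have hb : ∀ i, vert (inv (a (i - 1))) = vert (a i) := fun i => by simpa using conn (i - 1)
  have hab : ∀ i, a i ≠ inv (a (i - 1)) := fun i h =>
    ZMod.add_one_ne_sub_one hk i (injv (by simpa [← conn, hinv] using congrArg (vert ∘ inv) h))
  exact card_filter_or_div_card_rotations injv hb hab hdeg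

/-- Let `C = u_1 u_2 ... u_k` be a cycle in a multigraph (dart set `D`, tail map `vert`,
fixed-point-free edge-pairing involution `inv`), given by darts `a i` from `u_i` to
`u_{i+1}` (indices mod `k`), with all vertices `u_i` pairwise distinct and of degree at
least `3`.  Under a uniformly random orientable embedding (`C` being a facial walk iff the
rotation at each `u_i` maps the dart towards `u_{i+1}` to the dart towards `u_{i-1}` for
all `i`, or the reverse holds at every vertex), the probability that `C` is a facial walk
equals `2 ∏_{i=1}^k 1/(deg(u_i) - 1)`. -/
theorem probability_cycle_is_face {D V : Type*} [Fintype D] [DecidableEq D]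
    (vert : D → V) (inv : Equiv.Perm D)
    (hfpf : ∀ d, inv d ≠ d) (hinv : ∀ d, inv (inv d) = d)
    (k : ℕ) [NeZero k] (hk : 3 ≤ k) (a : ZMod k → D)
    (conn : ∀ i, vert (inv (a i)) = vert (a (i + 1)))
    (injv : Function.Injective fun i => vert (a i))
    (hdeg : ∀ i, 3 ≤ deg vert (vert (a i))) :
    (((rotations vert).filter fun ρ =>
          (∀ i, ρ (a i) = inv (a (i - 1))) ∨ (∀ i, ρ (inv (a (i - 1))) = a i)).card : ℝ) /
        ((rotations vert).card : ℝ) =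
      2 * ∏ i : ZMod k, 1 / ((deg vert (vert (a i)) : ℝ) - 1) :=
  probability_cycle_is_face_general vert inv hinv k hk a conn injv hdeg
end
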